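/- arXiv:2301.12478 — 2 statements merged into one kernel-verified Lean document; each statement's English description precedes it below -/
import Mathlib

section
/- Let G be a group with a discrete left-invariant preordering ⪯ having least positive element a. If 1 ≺ g then 1 ≺ aga⁻¹ and 1 ≺ a⁻¹ga; if g ≺ 1 then aga⁻¹ ≺ 1 and a⁻¹ga ≺ 1; if g ∼ 1 then aga⁻¹ ∼ 1 and a⁻¹ga ∼ 1. -/
/-- For a discrete left-invariant preordering with least positive
element `a`: conjugation by `a^{±1}` preserves the sign of an element. -/
theorem stmt7 {G : Type*} [Group G] (le : G → G → Prop)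
    (hrefl : ∀ g, le g g)
    (htrans : ∀ a b c, le a b → le b c → le a c)
    (htotal : ∀ a b, le a b ∨ le b a)
    (hinv : ∀ a b c, le a b → le (c * a) (c * b))
    (a : G) (hpos : le 1 a ∧ ¬ le a 1)
    (hleast : ∀ b : G, ¬ ((le 1 b ∧ ¬ le b 1) ∧ (le b a ∧ ¬ le a b)))
    (g : G) :
    ((le 1 g ∧ ¬ le g 1) →
      (le 1 (a * g * a⁻¹) ∧ ¬ le (a * g * a⁻¹) 1) ∧
      (le 1 (a⁻¹ * g * a) ∧ ¬ le (a⁻¹ * g * a) 1)) ∧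
    ((le g 1 ∧ ¬ le 1 g) →
      (le (a * g * a⁻¹) 1 ∧ ¬ le 1 (a * g * a⁻¹)) ∧
      (le (a⁻¹ * g * a) 1 ∧ ¬ le 1 (a⁻¹ * g * a))) ∧
    ((le g 1 ∧ le 1 g) →
      (le (a * g * a⁻¹) 1 ∧ le 1 (a * g * a⁻¹)) ∧
      (le (a⁻¹ * g * a) 1 ∧ le 1 (a⁻¹ * g * a))) := by
  have hmul : ∀ (c x y : G), le x y → le (c * x) (c * y) := fun c x y h => hinv x y c h
  -- a is below every strictly positive element
  have hP : ∀ m : G, le 1 m → ¬ le m 1 → le a m := by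
    intro m h1 h2
    by_contra hna
    rcases htotal m a with hma | ham
    · exact hleast m ⟨⟨h1, h2⟩, hma, hna⟩
    · exact hna ham
  -- key lemma: 1 ≺ x*a → 1 ≺ a*x
  have hL : ∀ x : G, le 1 (x * a) → ¬ le (x * a) 1 → le 1 (a * x) ∧ ¬ le (a * x) 1 := by
    intro x h1 h2
    have hn : ¬ le (a * x) 1 := by
      intro hax
      have hx : le x a⁻¹ := by simpa [mul_assoc] using hmul a⁻¹ (a * x) 1 hax
      have hia : le x⁻¹ a := by simpa [mul_assoc] using hmul x⁻¹ 1 (x * a) h1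
      have hnx : ¬ le a x⁻¹ := by
        intro h
        have h' : le (x * a) 1 := by simpa [mul_assoc] using hmul x a x⁻¹ h
        exact h2 h'
      have hx1 : ¬ le x⁻¹ 1 := by
        intro h
        have h1x : le 1 x := by simpa using hmul x x⁻¹ 1 h
        have h2x : le 1 a⁻¹ := htrans 1 x a⁻¹ h1x hx
        have h3x : le a 1 := by simpa using hmul a 1 a⁻¹ h2x
        exact hpos.2 h3x
      rcases htotal 1 x⁻¹ with h | h
      · exact hleast x⁻¹ ⟨⟨h, hx1⟩, hia, hnx⟩
      · exact hx1 h
    refine ⟨?_, hn⟩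
    rcases htotal 1 (a * x) with h | h
    · exact h
    · exact absurd h hn
  -- converse key lemma: 1 ≺ a*x → 1 ≺ x*a
  have hL' : ∀ x : G, le 1 (a * x) → ¬ le (a * x) 1 → le 1 (x * a) ∧ ¬ le (x * a) 1 := by
    intro x h1 h2
    have hn : ¬ le (x * a) 1 := by
      intro hc
      by_cases hx1 : le 1 (x * a)
      · -- x*a ∼ 1 : then x⁻¹ ∼ a is strictly positive
        have d1 : le a x⁻¹ := by simpa [mul_assoc] using hmul x⁻¹ (x * a) 1 hc
        have p1 : le 1 x⁻¹ := htrans 1 a x⁻¹ hpos.1 d1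
        have p2 : ¬ le x⁻¹ 1 := fun h => hpos.2 (htrans a x⁻¹ 1 d1 h)
        have e1 : le 1 (x⁻¹ * a⁻¹ * a) := by simpa [mul_assoc] using p1
        have e2 : ¬ le (x⁻¹ * a⁻¹ * a) 1 := by simpa [mul_assoc] using p2
        have hLapp := hL (x⁻¹ * a⁻¹) e1 e2
        have q := hP _ hLapp.1 hLapp.2
        have q2 : le 1 (x⁻¹ * a⁻¹) := by
          simpa [mul_assoc] using hmul a⁻¹ a (a * (x⁻¹ * a⁻¹)) q
        have q3 : le (a * x) 1 := by
          simpa [mul_assoc] using hmul (a * x) 1 (x⁻¹ * a⁻¹) q2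
        exact h2 q3
      · have d4 : le a x⁻¹ := by simpa [mul_assoc] using hmul x⁻¹ (x * a) 1 hc
        have d7 : le a (a * x) := hP _ h1 h2
        have d8 : le 1 x := by simpa [mul_assoc] using hmul a⁻¹ a (a * x) d7
        have d9 : le x⁻¹ 1 := by simpa using hmul x⁻¹ 1 x d8
        have d10 : le x⁻¹ a := htrans _ _ _ d9 hpos.1
        have d11 : le 1 (x * a) := by simpa using hmul x x⁻¹ a d10
        exact hx1 d11
    refine ⟨?_, hn⟩
    rcases htotal 1 (x * a) with h | h
    · exact h
    · exact absurd h hn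
  -- conjugation by a preserves strict positivity
  have hconjA : ∀ m : G, le 1 m → ¬ le m 1 →
      le 1 (a * m * a⁻¹) ∧ ¬ le (a * m * a⁻¹) 1 := by
    intro m h1 h2
    have e1 : le 1 (m * a⁻¹ * a) := by simpa [mul_assoc] using h1
    have e2 : ¬ le (m * a⁻¹ * a) 1 := by simpa [mul_assoc] using h2
    have := hL (m * a⁻¹) e1 e2
    exact ⟨by simpa [mul_assoc] using this.1, by simpa [mul_assoc] using this.2⟩
  -- conjugation by a⁻¹ preserves strict positivity
  have hconjAinv : ∀ m : G, le 1 m → ¬ le m 1 →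
      le 1 (a⁻¹ * m * a) ∧ ¬ le (a⁻¹ * m * a) 1 := by
    intro m h1 h2
    have e1 : le 1 (a * (a⁻¹ * m)) := by simpa [mul_assoc] using h1
    have e2 : ¬ le (a * (a⁻¹ * m)) 1 := by simpa [mul_assoc] using h2
    have := hL' (a⁻¹ * m) e1 e2
    exact ⟨by simpa [mul_assoc] using this.1, by simpa [mul_assoc] using this.2⟩
  -- inversion swaps strict positivity / negativity
  have hinvflip : ∀ m : G, le m 1 → ¬ le 1 m → le 1 m⁻¹ ∧ ¬ le m⁻¹ 1 := by
    intro m h1 h2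
    refine ⟨by simpa using hmul m⁻¹ m 1 h1, ?_⟩
    intro h
    exact h2 (by simpa using hmul m m⁻¹ 1 h)
  have hinvflip' : ∀ m : G, le 1 m → ¬ le m 1 → le m⁻¹ 1 ∧ ¬ le 1 m⁻¹ := by
    intro m h1 h2
    refine ⟨by simpa using hmul m⁻¹ 1 m h1, ?_⟩
    intro h
    exact h2 (by simpa using hmul m 1 m⁻¹ h)
  refine ⟨?_, ?_, ?_⟩
  · -- strictly positive case
    rintro ⟨h1, h2⟩
    exact ⟨hconjA g h1 h2, hconjAinv g h1 h2⟩
  · -- strictly negative case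
    rintro ⟨h1, h2⟩
    obtain ⟨i1, i2⟩ := hinvflip g h1 h2
    obtain ⟨j1, j2⟩ := hconjA g⁻¹ i1 i2
    obtain ⟨k1, k2⟩ := hconjAinv g⁻¹ i1 i2
    constructor
    · -- a*g*a⁻¹ strictly negative: it's the inverse of a*g⁻¹*a⁻¹
      obtain ⟨l1, l2⟩ := hinvflip' (a * g⁻¹ * a⁻¹) j1 j2
      constructor
      · simpa [mul_assoc, mul_inv_rev] using l1
      · simpa [mul_assoc, mul_inv_rev] using l2
    · obtain ⟨l1, l2⟩ := hinvflip' (a⁻¹ * g⁻¹ * a) k1 k2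
      constructor
      · simpa [mul_assoc, mul_inv_rev] using l1
      · simpa [mul_assoc, mul_inv_rev] using l2
  · -- g ∼ 1 case
    rintro ⟨h1, h2⟩
    have key : ∀ m : G, (a⁻¹ * m * a = g) → le m 1 ∧ le 1 m := by
      intro m hm
      constructor
      · by_contra hnm
        have hm1 : le 1 m := (htotal m 1).resolve_left hnm
        obtain ⟨k1, k2⟩ := hconjAinv m hm1 hnm
        rw [hm] at k2
        exact k2 h1
      · by_contra hnm
        have hm1 : le m 1 := (htotal 1 m).resolve_left hnm
        obtain ⟨i1, i2⟩ := hinvflip m hm1 hnm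
        obtain ⟨k1, k2⟩ := hconjAinv m⁻¹ i1 i2
        have : a⁻¹ * m⁻¹ * a = g⁻¹ := by
          rw [← hm]; group
        rw [this] at k2
        exact k2 (by simpa using hmul g⁻¹ 1 g h2)
    have key' : ∀ m : G, (a * m * a⁻¹ = g) → le m 1 ∧ le 1 m := by
      intro m hm
      constructor
      · by_contra hnm
        have hm1 : le 1 m := (htotal m 1).resolve_left hnm
        obtain ⟨k1, k2⟩ := hconjA m hm1 hnm
        rw [hm] at k2
        exact k2 h1
      · by_contra hnm
        have hm1 : le m 1 := (htotal 1 m).resolve_left hnm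
        obtain ⟨i1, i2⟩ := hinvflip m hm1 hnm
        obtain ⟨k1, k2⟩ := hconjA m⁻¹ i1 i2
        have : a * m⁻¹ * a⁻¹ = g⁻¹ := by
          rw [← hm]; group
        rw [this] at k2
        exact k2 (by simpa using hmul g⁻¹ 1 g h2)
    exact ⟨key (a * g * a⁻¹) (by group), key' (a⁻¹ * g * a) (by group)⟩
end

section
/- Let G be a group with a left-invariant preordering ⪯ and let κ ∈ G with 1 ≺ κ⁻¹. Suppose that the sets H⁺ = {g : 1 ⪯ g} and H⁻ = G \ H⁺ satisfy κ⁻¹H^tH^t ⊆ H^t for t = ±. Then there is no g ∈ G with 1 ≺ g ≺ κ⁻¹; that is, κ⁻¹ is a least positive element and ⪯ is discrete. -/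
/-- If `1 ≺ κ⁻¹` and the sets `H⁺ = {g : 1 ⪯ g}`, `H⁻ = G \ H⁺`
satisfy `κ⁻¹HᵗHᵗ ⊆ Hᵗ` for `t = ±`, then there is no `g` with `1 ≺ g ≺ κ⁻¹`;
that is, `κ⁻¹` is a least positive element and `⪯` is discrete. -/
theorem stmt8 {G : Type*} [Group G] (le : G → G → Prop)
    (hrefl : ∀ g, le g g)
    (htrans : ∀ a b c, le a b → le b c → le a c)
    (htotal : ∀ a b, le a b ∨ le b a)
    (hinv : ∀ a b c, le a b → le (c * a) (c * b))
    (κ : G) (hκ : le 1 κ⁻¹ ∧ ¬ le κ⁻¹ 1)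
    (hp : ∀ x, le 1 x → ∀ y, le 1 y → le 1 (κ⁻¹ * x * y))
    (hm : ∀ x, ¬ le 1 x → ∀ y, ¬ le 1 y → ¬ le 1 (κ⁻¹ * x * y)) :
    ∀ g : G, ¬ ((le 1 g ∧ ¬ le g 1) ∧ (le g κ⁻¹ ∧ ¬ le κ⁻¹ g)) := by
  rintro g ⟨⟨hg1, hg2⟩, hg3, hg4⟩
  have h1 : ¬ le 1 (κ * g) := by
    intro h
    have := hinv _ _ κ⁻¹ h
    simp only [mul_one, inv_mul_cancel_left] at this
    exact hg4 this
  have h2 : ¬ le 1 g⁻¹ := by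
    intro h
    have := hinv _ _ g h
    simp only [mul_one, mul_inv_cancel] at this
    exact hg2 this
  have := hm _ h1 _ h2
  have heq : κ⁻¹ * (κ * g) * g⁻¹ = 1 := by group
  rw [heq] at this
  exact this (hrefl 1)
end
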